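/- arXiv:1505.04428 — 2 statements merged into one kernel-verified Lean document; each statement's English description precedes it below -/
import Mathlib

section
/- Let p be an integer with p ≡ 3 (mod 17), and set p1 = p, p2 = 2p − 1, p3 = 2p + 1, x1 = −17, x2 = 17, x3 = 17. Then: (i) H := p1*p2*x3 + p1*p3*x2 + p2*p3*x1 = 17; and (ii) for all integers q1, q2, q3, y1, y2, y3 satisfying −17*q1 ≡ 1 (mod p1), 17*q2 ≡ 1 (mod p2), 17*q3 ≡ 1 (mod p3), p1*y1 = 17*q1 − p2*p3, p2*y2 = 17*q2 − p1*p3, p3*y3 = 17*q3 − p1*p2, there is no integer b such that b² is congruent modulo 17 to any of y1, −y1, y2, −y2, y3, −y3, p1*p2*p3, or −p1*p2*p3. -/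
instance fact_prime_17 : Fact (Nat.Prime 17) := ⟨by norm_num⟩


theorem stmt_5 (p : ℤ) (hp : p ≡ 3 [ZMOD 17]) :
    (p * (2 * p - 1) * 17 + p * (2 * p + 1) * 17 + (2 * p - 1) * (2 * p + 1) * (-17) = 17) ∧
    (∀ q1 q2 q3 y1 y2 y3 : ℤ,
      (-17) * q1 ≡ 1 [ZMOD p] →
      17 * q2 ≡ 1 [ZMOD 2 * p - 1] →
      17 * q3 ≡ 1 [ZMOD 2 * p + 1] →
      p * y1 = 17 * q1 - (2 * p - 1) * (2 * p + 1) →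
      (2 * p - 1) * y2 = 17 * q2 - p * (2 * p + 1) →
      (2 * p + 1) * y3 = 17 * q3 - p * (2 * p - 1) →
      ¬ ∃ b : ℤ,
        (b ^ 2 ≡ y1 [ZMOD 17] ∨ b ^ 2 ≡ -y1 [ZMOD 17] ∨
         b ^ 2 ≡ y2 [ZMOD 17] ∨ b ^ 2 ≡ -y2 [ZMOD 17] ∨
         b ^ 2 ≡ y3 [ZMOD 17] ∨ b ^ 2 ≡ -y3 [ZMOD 17] ∨
         b ^ 2 ≡ p * (2 * p - 1) * (2 * p + 1) [ZMOD 17] ∨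
         b ^ 2 ≡ -(p * (2 * p - 1) * (2 * p + 1)) [ZMOD 17])) := by
  have hp' : (p : ZMod 17) = 3 := by
    have h := (ZMod.intCast_eq_intCast_iff' p 3 17).mpr hp
    simpa using h
  have h17 : (17 : ZMod 17) = 0 := by decide
  refine ⟨by ring, ?_⟩
  intro q1 q2 q3 y1 y2 y3 _ _ _ e1 e2 e3
  rintro ⟨b, hb⟩
  have c1 : (y1 : ZMod 17) = 11 := by
    have h := congrArg (fun z : ℤ => (z : ZMod 17)) e1
    push_cast at h
    rw [hp', h17, zero_mul, zero_sub] at h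
    have h2 : (3 : ZMod 17) * (y1 : ZMod 17) = 3 * 11 := by rw [h]; decide
    exact mul_left_cancel₀ (by decide) h2
  have c2 : (y2 : ZMod 17) = 6 := by
    have h := congrArg (fun z : ℤ => (z : ZMod 17)) e2
    push_cast at h
    rw [hp', h17, zero_mul, zero_sub] at h
    have h2 : (2 * 3 - 1 : ZMod 17) * (y2 : ZMod 17) = (2 * 3 - 1) * 6 := by rw [h]; decide
    exact mul_left_cancel₀ (by decide) h2
  have c3 : (y3 : ZMod 17) = 10 := by
    have h := congrArg (fun z : ℤ => (z : ZMod 17)) e3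
    push_cast at h
    rw [hp', h17, zero_mul, zero_sub] at h
    have h2 : (2 * 3 + 1 : ZMod 17) * (y3 : ZMod 17) = (2 * 3 + 1) * 10 := by rw [h]; decide
    exact mul_left_cancel₀ (by decide) h2
  have key2 : ∀ x : ZMod 17, ¬(x ^ 2 = 11 ∨ x ^ 2 = -11 ∨ x ^ 2 = 6 ∨ x ^ 2 = -6 ∨
      x ^ 2 = 10 ∨ x ^ 2 = -10 ∨ x ^ 2 = 105 ∨ x ^ 2 = -105) := by decide
  rcases hb with h | h | h | h | h | h | h | h <;>
    · have h' := (ZMod.intCast_eq_intCast_iff' _ _ 17).mpr h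
      push_cast at h'
      simp only [hp', c1, c2, c3] at h'
      try norm_num at h'
      exact key2 (b : ZMod 17) (by tauto)
end

section
/- Set p1 = 2, p2 = 3, p3 = 7, x1 = −3, x2 = 1, x3 = 9. Then: (i) H := p1*p2*x3 + p1*p3*x2 + p2*p3*x1 = 5; and (ii) for all integers q1, q2, q3, y1, y2, y3 satisfying q1*x1 ≡ 1 (mod p1), q2*x2 ≡ 1 (mod p2), q3*x3 ≡ 1 (mod p3), p1*y1 = q1*5 − p2*p3, p2*y2 = q2*5 − p1*p3, p3*y3 = q3*5 − p1*p2, there is no integer b such that b² is congruent modulo 5 to any of y1, −y1, y2, −y2, y3, −y3, p1*p2*p3, or −p1*p2*p3. -/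
theorem stmt_11 :
    ((2 : ℤ) * 3 * 9 + 2 * 7 * 1 + 3 * 7 * (-3) = 5) ∧
    (∀ q1 q2 q3 y1 y2 y3 : ℤ,
      q1 * (-3) ≡ 1 [ZMOD 2] →
      q2 * 1 ≡ 1 [ZMOD 3] →
      q3 * 9 ≡ 1 [ZMOD 7] →
      2 * y1 = q1 * 5 - 3 * 7 →
      3 * y2 = q2 * 5 - 2 * 7 →
      7 * y3 = q3 * 5 - 2 * 3 →
      ¬ ∃ b : ℤ,
        (b ^ 2 ≡ y1 [ZMOD 5] ∨ b ^ 2 ≡ -y1 [ZMOD 5] ∨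
         b ^ 2 ≡ y2 [ZMOD 5] ∨ b ^ 2 ≡ -y2 [ZMOD 5] ∨
         b ^ 2 ≡ y3 [ZMOD 5] ∨ b ^ 2 ≡ -y3 [ZMOD 5] ∨
         b ^ 2 ≡ 2 * 3 * 7 [ZMOD 5] ∨ b ^ 2 ≡ -(2 * 3 * 7) [ZMOD 5])) := by
  constructor
  · norm_num
  intro q1 q2 q3 y1 y2 y3 h1 h2 h3 e1 e2 e3
  rintro ⟨b, hb⟩
  have key : ∀ z : ZMod 5, z ^ 2 ≠ 2 ∧ z ^ 2 ≠ 3 := by decide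
  have sq : ∀ c : ℤ, b ^ 2 ≡ c [ZMOD 5] → ((b : ZMod 5) ^ 2 = (c : ZMod 5)) := by
    intro c hc
    have := (ZMod.intCast_eq_intCast_iff _ _ _).mpr hc
    push_cast at this
    exact this
  have get23 : ∀ c : ℤ, (b : ZMod 5) ^ 2 = (c : ZMod 5) →
      (c % 5 = 2 % 5 ∨ c % 5 = 3 % 5) → False := by
    intro c hc h25
    rcases h25 with h | h
    · have : (c : ZMod 5) = ((2 : ℤ) : ZMod 5) :=
        (ZMod.intCast_eq_intCast_iff _ _ _).mpr h
      rw [this] at hc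
      exact (key b).1 (by push_cast at hc; exact hc)
    · have : (c : ZMod 5) = ((3 : ℤ) : ZMod 5) :=
        (ZMod.intCast_eq_intCast_iff _ _ _).mpr h
      rw [this] at hc
      exact (key b).2 (by push_cast at hc; exact hc)
  rcases hb with h | h | h | h | h | h | h | h <;>
    exact get23 _ (sq _ h) (by omega)
end
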